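/- Consider the cellular automaton on ℤ in which every cell uses the rule φ2 (φ2(x,y) = 1 iff (x,y) = (0,1)). For every initial configuration x(0) : ℤ → {0,1}: (a) for every t ≥ 1 there is no cell i with x_{i−1}(t) = 1 and x_{i+1}(t) = 1; and consequently (b) for every t ≥ 1 and every cell i, x_i(t+1) = x_{i+1}(t), i.e. from time 1 onward the automaton acts as the left shift. -/
import Mathlib

/-- A Boolean rule: a function `{0,1} × {0,1} → {0,1}`. -/
abbrev Rule : Type := Bool → Bool → Bool

/-- The rule `φ2`: `φ2(x,y) = 1` iff `(x,y) = (0,1)`. -/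
def phi2 : Rule := fun x y => !x && y

/-- Evolution of an inhomogeneous cellular automaton on ℤ:
`x_i(t+1) = φ_i(x_{i-1}(t), x_{i+1}(t))`. -/
def evolveZ (φ : ℤ → Rule) (x0 : ℤ → Bool) : ℕ → ℤ → Bool
  | 0 => x0
  | t+1 => fun i => φ i (evolveZ φ x0 t (i-1)) (evolveZ φ x0 t (i+1))

/-- for the φ2-CA on ℤ and any initial configuration:
(a) for every `t ≥ 1` there is no cell `i` with `x_{i-1}(t) = 1` and `x_{i+1}(t) = 1`;
(b) for every `t ≥ 1` and every cell `i`, `x_i(t+1) = x_{i+1}(t)` (left shift from time 1 on). -/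
theorem stmt17 (x0 : ℤ → Bool) :
    (∀ t : ℕ, 1 ≤ t → ∀ i : ℤ,
      ¬(evolveZ (fun _ => phi2) x0 t (i - 1) = true ∧
        evolveZ (fun _ => phi2) x0 t (i + 1) = true)) ∧
    (∀ t : ℕ, 1 ≤ t → ∀ i : ℤ,
      evolveZ (fun _ => phi2) x0 (t + 1) i = evolveZ (fun _ => phi2) x0 t (i + 1)) := by
  have ha : ∀ t : ℕ, 1 ≤ t → ∀ i : ℤ,
      ¬(evolveZ (fun _ => phi2) x0 t (i - 1) = true ∧
        evolveZ (fun _ => phi2) x0 t (i + 1) = true) := by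
    intro t ht i ⟨h1, h2⟩
    obtain ⟨s, rfl⟩ : ∃ s, t = s + 1 := ⟨t - 1, by omega⟩
    simp only [evolveZ, phi2] at h1 h2
    have e1 : i - 1 + 1 = i := by ring
    have e2 : i + 1 - 1 = i := by ring
    rw [e1] at h1; rw [e2] at h2
    rcases Bool.and_eq_true _ _ |>.mp h1 with ⟨_, hb⟩
    rcases Bool.and_eq_true _ _ |>.mp h2 with ⟨hc, _⟩
    simp [hb] at hc
  refine ⟨ha, fun t ht i => ?_⟩
  have := ha t ht i
  show phi2 (evolveZ (fun _ => phi2) x0 t (i-1)) (evolveZ (fun _ => phi2) x0 t (i+1)) = _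
  by_cases h : evolveZ (fun _ => phi2) x0 t (i+1) = true
  · have hf : evolveZ (fun _ => phi2) x0 t (i-1) = false := by
      cases h' : evolveZ (fun _ => phi2) x0 t (i-1)
      · rfl
      · exact absurd ⟨h', h⟩ this
    simp [phi2, h, hf]
  · simp [phi2, Bool.not_eq_true] at h ⊢
    simp [h]
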